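/- Under the standing assumptions, for every θ ∈ ℝ^d, every 0 < λ < 1 and every ε_h ∈ (0,1/2], the derivative of the tamed coefficient satisfies the polynomial growth bound ‖∇h_λ(θ)‖ ≤ K_{∇,ε_h} (1+|θ|)^{(l+1)/ε_h + l}, where K_{∇,ε_h} := (10√2 + 4/ε_h)(l+1)² · max{K_H, L, K_h, a, ‖∇h_λ(0)‖, 1}. -/

import Mathlib

/-!
Write `h_λ(x) = a x + φ(x) (h(x) - a x)` with `φ(x) = (1 + λ‖x‖^p)^(-ε)` and `p = (l+1)/ε`.
The product rule gives `∇h_λ = a I + φ (H - a I) + ∇φ ⊗ (h - a x)`. Since `0 ≤ φ ≤ 1`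
and `‖∇φ(x)‖ ≤ ε λ p ‖x‖^(p-1) = λ (l+1) ‖x‖^(p-1)`, the polynomial growth of `H` and `h`
bounds the three terms by multiples of `(1 + ‖x‖)^(p+l)`; the total constant `3l + 7` is
already below the one claimed.
-/

open Real

theorem ContDiff.differentiable_gradient {E : Type*} [NormedAddCommGroup E]
    [InnerProductSpace ℝ E] [CompleteSpace E] {u : E → ℝ} {n : WithTop ℕ∞}
    (hu : ContDiff ℝ n u) (hn : 2 ≤ n) : Differentiable ℝ (gradient u) :=
  ((InnerProductSpace.toDual ℝ E).symm.contDiff.comp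
    (hu.fderiv_right (m := 1) (by simpa [one_add_one_eq_two] using hn))).differentiable
    one_ne_zero

section TamingFactor

variable {E : Type*} [NormedAddCommGroup E] {lam eps p : ℝ}

noncomputable def tamingFactor (lam eps p : ℝ) (x : E) : ℝ :=
  ((1 + lam * ‖x‖ ^ p) ^ eps)⁻¹

lemma one_le_one_add_mul_norm_rpow (hlam : 0 ≤ lam) (x : E) : 1 ≤ 1 + lam * ‖x‖ ^ p :=
  le_add_of_nonneg_right (mul_nonneg hlam (rpow_nonneg (norm_nonneg x) p))

lemma tamingFactor_eq_rpow_neg (hlam : 0 ≤ lam) (x : E) :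
    tamingFactor lam eps p x = (1 + lam * ‖x‖ ^ p) ^ (-eps) :=
  (rpow_neg (zero_le_one.trans (one_le_one_add_mul_norm_rpow hlam x)) eps).symm

lemma tamingFactor_nonneg (hlam : 0 ≤ lam) (x : E) : 0 ≤ tamingFactor lam eps p x := by
  rw [tamingFactor_eq_rpow_neg hlam]
  exact rpow_nonneg (zero_le_one.trans (one_le_one_add_mul_norm_rpow hlam x)) _

lemma tamingFactor_le_one (hlam : 0 ≤ lam) (heps : 0 ≤ eps) (x : E) :
    tamingFactor lam eps p x ≤ 1 :=
  inv_le_one_of_one_le₀ (one_le_rpow (one_le_one_add_mul_norm_rpow hlam x) heps)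

variable [InnerProductSpace ℝ E]

lemma hasFDerivAt_tamingFactor (hlam : 0 ≤ lam) (hp : 1 < p) (x : E) :
    HasFDerivAt (tamingFactor lam eps p)
      ((-eps * (1 + lam * ‖x‖ ^ p) ^ (-eps - 1) * lam * p * ‖x‖ ^ (p - 2)) • innerSL ℝ x) x := by
  have hbase := ((hasFDerivAt_norm_rpow x hp).const_mul lam).const_add 1
  have hpow := (hasDerivAt_rpow_const (p := -eps)
    (Or.inl (zero_lt_one.trans_le (one_le_one_add_mul_norm_rpow hlam x)).ne')).comp_hasFDerivAt
    x hbase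
  rw [show tamingFactor lam eps p = (· ^ (-eps)) ∘ fun y : E ↦ 1 + lam * ‖y‖ ^ p from
    funext (tamingFactor_eq_rpow_neg hlam)]
  refine hpow.congr_fderiv ?_
  simp only [smul_smul]
  ring_nf

lemma norm_fderiv_tamingFactor_le (hlam : 0 ≤ lam) (heps : 0 ≤ eps) (hp : 1 < p) (x : E) :
    ‖fderiv ℝ (tamingFactor lam eps p) x‖ ≤ eps * lam * p * ‖x‖ ^ (p - 1) := by
  have hp0 : 0 ≤ p := zero_le_one.trans hp.le
  have hw : (1 + lam * ‖x‖ ^ p) ^ (-eps - 1) ≤ 1 :=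
    rpow_le_one_of_one_le_of_nonpos (one_le_one_add_mul_norm_rpow hlam x) (by linarith)
  rw [(hasFDerivAt_tamingFactor hlam hp x).fderiv, norm_smul, innerSL_apply_norm,
    neg_mul, neg_mul, neg_mul, neg_mul, norm_neg, Real.norm_of_nonneg (by positivity)]
  calc _ ≤ eps * 1 * lam * p * ‖x‖ ^ (p - 2) * ‖x‖ := by gcongr
    _ = eps * lam * p * ‖x‖ ^ (p - 2 + 1) := by
        rw [rpow_add_one' (norm_nonneg x) (by linarith)]; ring
    _ = _ := by ring_nf

end TamingFactor

lemma norm_fderiv_tamed_le {E : Type*} [NormedAddCommGroup E] [NormedSpace ℝ E]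
    {f : E → E} {φ : E → ℝ} {f' : E →L[ℝ] E} {φ' : E →L[ℝ] ℝ} {a : ℝ} {x : E}
    (hf : HasFDerivAt f f' x) (hφ : HasFDerivAt φ φ' x) (ha : 0 ≤ a)
    (hφ0 : 0 ≤ φ x) (hφ1 : φ x ≤ 1) :
    ‖fderiv ℝ (fun y ↦ a • y + φ y • (f y - a • y)) x‖ ≤
      a + (‖f'‖ + a) + ‖φ'‖ * (‖f x‖ + a * ‖x‖) := by
  have hid : ‖a • ContinuousLinearMap.id ℝ E‖ ≤ a := by
    rw [norm_smul, Real.norm_of_nonneg ha]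
    exact mul_le_of_le_one_right ha ContinuousLinearMap.norm_id_le
  have hD : HasFDerivAt (fun y ↦ a • y + φ y • (f y - a • y)) (a • ContinuousLinearMap.id ℝ E +
      (φ x • (f' - a • ContinuousLinearMap.id ℝ E) + φ'.smulRight (f x - a • x))) x :=
    ((hasFDerivAt_id x).const_smul a).add (hφ.smul (hf.sub ((hasFDerivAt_id x).const_smul a)))
  rw [hD.fderiv]
  calc _ ≤ ‖a • ContinuousLinearMap.id ℝ E‖ + (‖φ x • (f' - a • ContinuousLinearMap.id ℝ E)‖
          + ‖φ'.smulRight (f x - a • x)‖) :=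
        (norm_add_le _ _).trans (add_le_add le_rfl (norm_add_le _ _))
    _ ≤ a + (1 * (‖f'‖ + a) + ‖φ'‖ * (‖f x‖ + a * ‖x‖)) := by
        rw [norm_smul (φ x), ContinuousLinearMap.norm_smulRight_apply, Real.norm_of_nonneg hφ0]
        gcongr
        · exact (norm_sub_le _ _).trans (add_le_add le_rfl hid)
        · exact (norm_sub_le _ _).trans (by rw [norm_smul, Real.norm_of_nonneg ha])
    _ = _ := by ring

lemma one_add_pow_le_two_mul_one_add_pow {t : ℝ} (ht : 0 ≤ t) {m n : ℕ} (hmn : m ≤ n) :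
    1 + t ^ m ≤ 2 * (1 + t) ^ n := by
  have h1 : 1 ≤ 1 + t := le_add_of_nonneg_right ht
  have : t ^ m ≤ (1 + t) ^ n :=
    (pow_le_pow_left₀ ht (by linarith) m).trans (pow_le_pow_right₀ h1 hmn)
  linarith [one_le_pow₀ (n := n) h1]

theorem norm_fderiv_tamed_le_of_polyGrowth {E : Type*} [NormedAddCommGroup E]
    [InnerProductSpace ℝ E] {f : E → E} {f' : E →L[ℝ] E} {a M lam eps : ℝ} {l : ℕ} {θ : E}
    (hf : HasFDerivAt f f' θ) (hf' : ‖f'‖ ≤ M * (1 + ‖θ‖ ^ l))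
    (hfθ : ‖f θ‖ ≤ M * (1 + ‖θ‖ ^ (l + 1))) (ha : 0 ≤ a) (haM : a ≤ M)
    (hlam0 : 0 ≤ lam) (hlam1 : lam ≤ 1) (heps0 : 0 < eps) (heps1 : eps < 1) :
    ‖fderiv ℝ (fun x ↦ a • x + tamingFactor lam eps ((l + 1) / eps) x • (f x - a • x)) θ‖ ≤
      (3 * l + 7) * M * (1 + ‖θ‖) ^ ((l + 1) / eps + l) := by
  set p : ℝ := (l + 1) / eps
  set N : ℝ := 1 + ‖θ‖
  have hM : 0 ≤ M := ha.trans haM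
  have hp : 1 < p := by
    rw [lt_div_iff₀ heps0]; nlinarith [(Nat.cast_nonneg l : (0 : ℝ) ≤ l)]
  have hN : 1 ≤ N := le_add_of_nonneg_right (norm_nonneg θ)
  have hNl : 1 ≤ N ^ (l + 1) := one_le_pow₀ hN
  have hNp : 1 ≤ N ^ (p - 1) := one_le_rpow hN (by linarith)
  have hφ' : ‖fderiv ℝ (tamingFactor lam eps p) θ‖ ≤ (l + 1) * N ^ (p - 1) := by
    calc _ ≤ eps * lam * p * ‖θ‖ ^ (p - 1) := norm_fderiv_tamingFactor_le hlam0 heps0.le hp θ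
      _ = lam * (eps * p) * ‖θ‖ ^ (p - 1) := by ring
      _ ≤ 1 * (l + 1) * N ^ (p - 1) := by
        rw [mul_div_cancel₀ _ heps0.ne']
        gcongr
        exact le_add_of_nonneg_left zero_le_one
      _ = _ := by ring
  have hf'N : ‖f'‖ + a ≤ 3 * M * N ^ (l + 1) := by
    have : 1 + ‖θ‖ ^ l ≤ 2 * N ^ (l + 1) :=
      one_add_pow_le_two_mul_one_add_pow (norm_nonneg θ) (Nat.le_succ l)
    nlinarith
  have hfN : ‖f θ‖ + a * ‖θ‖ ≤ 3 * M * N ^ (l + 1) := by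
    have : 1 + ‖θ‖ ^ (l + 1) ≤ 2 * N ^ (l + 1) :=
      one_add_pow_le_two_mul_one_add_pow (norm_nonneg θ) le_rfl
    have hθN : ‖θ‖ ≤ N ^ (l + 1) :=
      (le_add_of_nonneg_left zero_le_one).trans (le_self_pow₀ hN (by omega))
    nlinarith [mul_le_mul haM hθN (norm_nonneg θ) (by linarith)]
  have hNpl : N ^ (p + l) = N ^ (l + 1) * N ^ (p - 1) := by
    rw [← rpow_natCast, ← rpow_add (by linarith)]; push_cast; ring_nf
  calc _ ≤ a + (‖f'‖ + a) + ‖fderiv ℝ (tamingFactor lam eps p) θ‖ * (‖f θ‖ + a * ‖θ‖) :=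
        norm_fderiv_tamed_le hf
          (hasFDerivAt_tamingFactor hlam0 hp θ).differentiableAt.hasFDerivAt ha
          (tamingFactor_nonneg hlam0 θ) (tamingFactor_le_one hlam0 heps0.le θ)
    _ ≤ M * N ^ (l + 1) + 3 * M * N ^ (l + 1) + (l + 1) * N ^ (p - 1) * (3 * M * N ^ (l + 1)) := by
        gcongr
        exact haM.trans (le_mul_of_one_le_right (by linarith) hNl)
    _ ≤ (3 * l + 7) * M * N ^ (p + l) := by
        rw [hNpl]
        nlinarith [mul_le_mul_of_nonneg_left hNp (mul_nonneg hM (by positivity) : 0 ≤ M * N ^ (l + 1))]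

theorem kTULA_tamed_deriv_polygrowth_general
    {d : ℕ}
    (u : EuclideanSpace ℝ (Fin d) → ℝ) (hu : ContDiff ℝ 3 u)
    (h : EuclideanSpace ℝ (Fin d) → EuclideanSpace ℝ (Fin d))
    (H : EuclideanSpace ℝ (Fin d) →
      EuclideanSpace ℝ (Fin d) →L[ℝ] EuclideanSpace ℝ (Fin d))
    (hgrad : ∀ θ, h θ = gradient u θ)
    (hHess : ∀ θ, H θ = fderiv ℝ (gradient u) θ)
    (L K_H K_h a : ℝ)
    (ha : 0 < a)
    (l : ℕ)
    (hH_bd : ∀ θ : EuclideanSpace ℝ (Fin d), ‖H θ‖ ≤ K_H * (1 + ‖θ‖ ^ l))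
    (hh_bd : ∀ θ : EuclideanSpace ℝ (Fin d), ‖h θ‖ ≤ K_h * (1 + ‖θ‖ ^ (l + 1)))
    (hlam : ℝ → ℝ → EuclideanSpace ℝ (Fin d) → EuclideanSpace ℝ (Fin d))
    (hlam_def : ∀ (lam eps : ℝ) (θ : EuclideanSpace ℝ (Fin d)),
      hlam lam eps θ =
        a • θ + ((1 + lam * ‖θ‖ ^ (((l : ℝ) + 1) / eps)) ^ eps)⁻¹ • (h θ - a • θ)) :
    ∀ (θ : EuclideanSpace ℝ (Fin d)) (lam eps : ℝ),
      0 < lam → lam < 1 → 0 < eps → eps ≤ 1 / 2 →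
      ‖fderiv ℝ (hlam lam eps) θ‖ ≤
        (10 * Real.sqrt 2 + 4 / eps) * ((l : ℝ) + 1) ^ 2 *
          max (max (max (max (max K_H L) K_h) a) ‖fderiv ℝ (hlam lam eps) 0‖) 1 *
          (1 + ‖θ‖) ^ (((l : ℝ) + 1) / eps + l) := by
  intro θ lam eps hlam0 hlam1 heps0 heps2
  obtain rfl : h = gradient u := funext hgrad
  have hHθ : HasFDerivAt (gradient u) (H θ) θ :=
    hHess θ ▸ (hu.differentiable_gradient (by norm_num) θ).hasFDerivAt
  set M := max (max (max (max (max K_H L) K_h) a) ‖fderiv ℝ (hlam lam eps) 0‖) 1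
  have hK_HM : K_H ≤ M := by simp [M]
  have hK_hM : K_h ≤ M := by simp [M]
  have haM : a ≤ M := by simp [M]
  have hconst : (3 * l + 7 : ℝ) ≤ (10 * sqrt 2 + 4 / eps) * ((l : ℝ) + 1) ^ 2 := by
    have : 8 ≤ 4 / eps := by rw [le_div_iff₀ heps0]; linarith
    nlinarith [sqrt_nonneg 2, (Nat.cast_nonneg l : (0 : ℝ) ≤ l)]
  rw [show hlam lam eps = _ from funext (hlam_def lam eps)]
  refine (norm_fderiv_tamed_le_of_polyGrowth hHθ ((hH_bd θ).trans ?_) ((hh_bd θ).trans ?_)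
    ha.le haM hlam0.le hlam1.le heps0 (by linarith)).trans ?_
  all_goals gcongr

theorem kTULA_tamed_deriv_polygrowth
    {d : ℕ} (hd : 0 < d)
    (u : EuclideanSpace ℝ (Fin d) → ℝ) (hu : ContDiff ℝ 3 u)
    (h : EuclideanSpace ℝ (Fin d) → EuclideanSpace ℝ (Fin d))
    (H : EuclideanSpace ℝ (Fin d) →
      EuclideanSpace ℝ (Fin d) →L[ℝ] EuclideanSpace ℝ (Fin d))
    (hgrad : ∀ θ, h θ = gradient u θ)
    (hHess : ∀ θ, H θ = fderiv ℝ (gradient u) θ)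
    (L K_H K_h a b : ℝ)
    (hL : 0 < L) (hK_H : 0 < K_H) (hK_h : 0 < K_h) (ha : 0 < a) (hb : 0 < b)
    (l : ℕ) (hl : 1 ≤ l)
    (hH_lip : ∀ θ θ' : EuclideanSpace ℝ (Fin d),
      ‖H θ - H θ'‖ ≤ L * (1 + ‖θ‖ + ‖θ'‖) ^ (l - 1) * ‖θ - θ'‖)
    (hH_bd : ∀ θ : EuclideanSpace ℝ (Fin d), ‖H θ‖ ≤ K_H * (1 + ‖θ‖ ^ l))
    (hh_bd : ∀ θ : EuclideanSpace ℝ (Fin d), ‖h θ‖ ≤ K_h * (1 + ‖θ‖ ^ (l + 1)))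
    (hdiss : ∀ θ : EuclideanSpace ℝ (Fin d), a * ‖θ‖ ^ 2 - b ≤ (inner ℝ (h θ) θ : ℝ))
    (hlam : ℝ → ℝ → EuclideanSpace ℝ (Fin d) → EuclideanSpace ℝ (Fin d))
    (hlam_def : ∀ (lam eps : ℝ) (θ : EuclideanSpace ℝ (Fin d)),
      hlam lam eps θ =
        a • θ + ((1 + lam * ‖θ‖ ^ (((l : ℝ) + 1) / eps)) ^ eps)⁻¹ • (h θ - a • θ)) :
    ∀ (θ : EuclideanSpace ℝ (Fin d)) (lam eps : ℝ),
      0 < lam → lam < 1 → 0 < eps → eps ≤ 1 / 2 →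
      ‖fderiv ℝ (hlam lam eps) θ‖ ≤
        (10 * Real.sqrt 2 + 4 / eps) * ((l : ℝ) + 1) ^ 2 *
          max (max (max (max (max K_H L) K_h) a) ‖fderiv ℝ (hlam lam eps) 0‖) 1 *
          (1 + ‖θ‖) ^ (((l : ℝ) + 1) / eps + l) :=
  kTULA_tamed_deriv_polygrowth_general u hu h H hgrad hHess L K_H K_h a ha l hH_bd hh_bd hlam
    hlam_def
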